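/- arXiv:1104.5698 — 3 statements merged into one kernel-verified Lean document; each statement's English description precedes it below -/
import Mathlib

section
/- Fix a natural number g. For every partition λ, in the rational function field ℚ(s,y) one has H''_λ(s, 1/(ys)) = (s²y²)^{(1−g)|λ|} · ℋ'_λ(s², y, y), where H''_λ(z,w) = ∏_{x∈d(λ)} (z^{2a+1} − w^{2l+1})^{2g} / ((z^{2a+2} − w^{2l})(z^{2a} − w^{2l+2})) and ℋ'_λ(s²,y,y) is obtained from ℋ'_λ(t,u,v) by substituting t = s², u = v = y. -/
/-- The arm length `a(x) = λ_i − j` of a box of a Young diagram (0-indexed cells). -/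
def YoungDiagram.armLen (μ : YoungDiagram) (c : ℕ × ℕ) : ℕ :=
  μ.rowLen c.1 - (c.2 + 1)

/-- The leg length `l(x) = λ'_j − i` of a box of a Young diagram (0-indexed cells). -/
def YoungDiagram.legLen (μ : YoungDiagram) (c : ℕ × ℕ) : ℕ :=
  μ.colLen c.2 - (c.1 + 1)

/-- The hook length `h(x) = a(x) + l(x) + 1` of a box of a Young diagram. -/
def YoungDiagram.hookLen (μ : YoungDiagram) (c : ℕ × ℕ) : ℕ :=
  μ.armLen c + μ.legLen c + 1

/-- `n(λ) = Σ_{i≥1} (i−1)·λ_i` for the partition `λ` encoded by a Young diagram. -/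
def YoungDiagram.nInv (μ : YoungDiagram) : ℕ :=
  ∑ i ∈ Finset.range (μ.colLen 0), i * μ.rowLen i


lemma prod_zpow_sum {F : Type*} [Field F] {c : F} (hc : c ≠ 0) {α : Type*}
    (s : Finset α) (e : α → ℤ) : ∏ x ∈ s, c ^ e x = c ^ (∑ x ∈ s, e x) := by
  induction s using Finset.cons_induction with
  | empty => simp
  | cons a s ha ih => rw [Finset.prod_cons, Finset.sum_cons, ih, ← zpow_add₀ hc]

lemma cell_eq {F : Type*} [Field F] (s y : F) (hs : s ≠ 0) (hy : y ≠ 0) (g a l : ℕ) :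
    (s ^ (2 * a + 1) - (1 / (y * s)) ^ (2 * l + 1)) ^ (2 * g) /
      ((s ^ (2 * a + 2) - (1 / (y * s)) ^ (2 * l)) *
        (s ^ (2 * a) - (1 / (y * s)) ^ (2 * l + 2)))
    = (s ^ 2 * y ^ 2) ^ (((1 : ℤ) - g) * (2 * l + 1)) *
      ((1 - (s ^ 2) ^ (a + l + 1) * y ^ l * y ^ (l + 1)) ^ g *
        (1 - (s ^ 2) ^ (a + l + 1) * y ^ l * y ^ (l + 1)) ^ g /
        ((1 - (s ^ 2) ^ (a + l + 1) * (y * y) ^ (l + 1)) *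
          (1 - (s ^ 2) ^ (a + l + 1) * (y * y) ^ l))) := by
  have hY : y * s ≠ 0 := mul_ne_zero hy hs
  have hZ : ((y * s) ^ 2 : F) ≠ 0 := pow_ne_zero _ hY
  set N : F := 1 - s ^ (2 * a + 2 * l + 2) * y ^ (2 * l + 1) with hN
  set D1 : F := 1 - s ^ (2 * a + 2 * l + 2) * y ^ (2 * l + 2) with hD1
  set D2 : F := 1 - s ^ (2 * a + 2 * l + 2) * y ^ (2 * l) with hD2
  have e1 : s ^ (2 * a + 1) - (1 / (y * s)) ^ (2 * l + 1)
      = -((y * s)⁻¹ ^ (2 * l + 1)) * N := by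
    have hX : (y * s)⁻¹ ^ (2 * l + 1) * (y * s) ^ (2 * l + 1) = 1 := by
      rw [← mul_pow, inv_mul_cancel₀ hY, one_pow]
    rw [hN, one_div]; linear_combination (-(s ^ (2 * a + 1))) * hX
  have e2 : s ^ (2 * a + 2) - (1 / (y * s)) ^ (2 * l)
      = -((y * s)⁻¹ ^ (2 * l)) * D2 := by
    have hX : (y * s)⁻¹ ^ (2 * l) * (y * s) ^ (2 * l) = 1 := by
      rw [← mul_pow, inv_mul_cancel₀ hY, one_pow]
    rw [hD2, one_div]; linear_combination (-(s ^ (2 * a + 2))) * hX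
  have e3 : s ^ (2 * a) - (1 / (y * s)) ^ (2 * l + 2)
      = -((y * s)⁻¹ ^ (2 * l + 2)) * D1 := by
    have hX : (y * s)⁻¹ ^ (2 * l + 2) * (y * s) ^ (2 * l + 2) = 1 := by
      rw [← mul_pow, inv_mul_cancel₀ hY, one_pow]
    rw [hD1, one_div]; linear_combination (-(s ^ (2 * a))) * hX
  have r1 : (1 : F) - (s ^ 2) ^ (a + l + 1) * y ^ l * y ^ (l + 1) = N := by rw [hN]; ring
  have r2 : (1 : F) - (s ^ 2) ^ (a + l + 1) * (y * y) ^ (l + 1) = D1 := by rw [hD1]; ring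
  have r3 : (1 : F) - (s ^ 2) ^ (a + l + 1) * (y * y) ^ l = D2 := by rw [hD2]; ring
  have key : (s ^ 2 * y ^ 2 : F) ^ (((1 : ℤ) - g) * (2 * l + 1))
      = ((y * s) ^ 2) ^ (2 * l + 1) * ((y * s)⁻¹ ^ (2 * l + 1)) ^ (2 * g) := by
    have hbase : (s ^ 2 * y ^ 2 : F) = (y * s) ^ 2 := by ring
    have h1 : (((y * s)⁻¹ ^ (2 * l + 1)) ^ (2 * g) : F)
        = (((y * s) ^ 2) ^ ((2 * l + 1) * g))⁻¹ := by
      rw [inv_pow, inv_pow, ← pow_mul, ← pow_mul]; congr 1; ring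
    rw [hbase, h1, sub_mul, one_mul, zpow_sub₀ hZ, div_eq_mul_inv]
    congr 1
    · rw [← zpow_natCast ((y * s) ^ 2) (2 * l + 1)]; congr 1
    · congr 1; rw [← zpow_natCast ((y * s) ^ 2) ((2 * l + 1) * g)]; congr 1; push_cast; ring
  rw [e1, e2, e3, r1, r2, r3, key]
  by_cases hD : D1 * D2 = 0
  · rcases mul_eq_zero.mp hD with h | h <;>
      simp [h, div_zero, mul_zero, zero_mul, mul_comm]
  · obtain ⟨h1, h2⟩ : D1 ≠ 0 ∧ D2 ≠ 0 := by
      constructor <;> intro h <;> apply hD <;> simp [h]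
    have hW : (y * s) ^ (4 * l + 2) * (y * s)⁻¹ ^ (4 * l + 2) = 1 := by
      rw [← mul_pow, mul_inv_cancel₀ hY, one_pow]
    have hneg : (-1 : F) ^ (2 * g) = 1 := by rw [pow_mul]; simp
    clear_value N D1 D2
    field_simp
    linear_combination ((y * s)⁻¹ ^ (2 * g * (2 * l + 1)) * N ^ (2 * g)) * hneg
      - ((y * s)⁻¹ ^ (2 * g * (2 * l + 1)) * N ^ (2 * g)) * hW

lemma sum_cells_row {M : Type*} [AddCommMonoid M] (μ : YoungDiagram) (f : ℕ × ℕ → M) :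
    ∑ x ∈ μ.cells, f x
      = ∑ i ∈ Finset.range (μ.colLen 0), ∑ j ∈ Finset.range (μ.rowLen i), f (i, j) := by
  rw [Finset.sum_sigma']
  refine Finset.sum_nbij' (fun x => ⟨x.1, x.2⟩) (fun x => (x.1, x.2)) ?_ ?_ ?_ ?_ ?_
  · intro x hx
    rw [YoungDiagram.mem_cells] at hx
    simp only [Finset.mem_sigma, Finset.mem_range]
    exact ⟨YoungDiagram.mem_iff_lt_colLen.mp (μ.up_left_mem le_rfl (Nat.zero_le _) hx),
      YoungDiagram.mem_iff_lt_rowLen.mp hx⟩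
  · intro x hx
    simp only [Finset.mem_sigma, Finset.mem_range] at hx
    rw [YoungDiagram.mem_cells]
    exact YoungDiagram.mem_iff_lt_rowLen.mpr hx.2
  · intro x _; rfl
  · intro x _; rfl
  · intro x _; rfl

lemma sum_cells_col {M : Type*} [AddCommMonoid M] (μ : YoungDiagram) (f : ℕ × ℕ → M) :
    ∑ x ∈ μ.cells, f x
      = ∑ j ∈ Finset.range (μ.rowLen 0), ∑ i ∈ Finset.range (μ.colLen j), f (i, j) := by
  rw [Finset.sum_sigma']
  refine Finset.sum_nbij' (fun x => ⟨x.2, x.1⟩) (fun x => (x.2, x.1)) ?_ ?_ ?_ ?_ ?_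
  · intro x hx
    rw [YoungDiagram.mem_cells] at hx
    simp only [Finset.mem_sigma, Finset.mem_range]
    exact ⟨YoungDiagram.mem_iff_lt_rowLen.mp (μ.up_left_mem (Nat.zero_le _) le_rfl hx),
      YoungDiagram.mem_iff_lt_colLen.mp hx⟩
  · intro x hx
    simp only [Finset.mem_sigma, Finset.mem_range] at hx
    rw [YoungDiagram.mem_cells]
    exact YoungDiagram.mem_iff_lt_colLen.mpr hx.2
  · intro x _; rfl
  · intro x _; rfl
  · intro x _; rfl

lemma sum_legLen (μ : YoungDiagram) : ∑ x ∈ μ.cells, μ.legLen x = μ.nInv := by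
  have h1 : ∑ x ∈ μ.cells, μ.legLen x = ∑ x ∈ μ.cells, x.1 := by
    rw [sum_cells_col μ (fun x => μ.legLen x), sum_cells_col μ (fun x => x.1)]
    refine Finset.sum_congr rfl fun j _ => ?_
    rw [← Finset.sum_range_reflect (fun i => i) (μ.colLen j)]
    refine Finset.sum_congr rfl fun i hi => ?_
    simp only [Finset.mem_range] at hi
    show μ.colLen j - (i + 1) = μ.colLen j - 1 - i
    omega
  rw [h1, sum_cells_row μ (fun x => x.1)]
  unfold YoungDiagram.nInv
  refine Finset.sum_congr rfl fun i _ => ?_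
  simp [Finset.sum_const, mul_comm]

/-- The rational function field `ℚ(s,y)`. -/
noncomputable abbrev K2 : Type := FractionRing (MvPolynomial (Fin 2) ℚ)

/-- The variable `s` of `ℚ(s,y)`. -/
noncomputable def sK : K2 := algebraMap (MvPolynomial (Fin 2) ℚ) K2 (MvPolynomial.X 0)

/-- The variable `y` of `ℚ(s,y)`. -/
noncomputable def yK : K2 := algebraMap (MvPolynomial (Fin 2) ℚ) K2 (MvPolynomial.X 1)

/-- `ℋ'_λ(t,u,v) = (tuv)^{(2−2g)n(λ)} ∏_{x∈d(λ)}
  (1−t^h v^l u^{l+1})^g (1−t^h u^l v^{l+1})^g / ((1−t^h(uv)^{l+1})(1−t^h(uv)^l))`,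
as a function of the arguments `t, u, v`. -/
noncomputable def Hprime (g : ℕ) (μ : YoungDiagram) (t u v : K2) : K2 :=
  (t * u * v) ^ (((2 : ℤ) - 2 * g) * (μ.nInv : ℤ)) *
    ∏ x ∈ μ.cells,
      ((1 - t ^ μ.hookLen x * v ^ μ.legLen x * u ^ (μ.legLen x + 1)) ^ g
        * (1 - t ^ μ.hookLen x * u ^ μ.legLen x * v ^ (μ.legLen x + 1)) ^ g
        / ((1 - t ^ μ.hookLen x * (u * v) ^ (μ.legLen x + 1))
            * (1 - t ^ μ.hookLen x * (u * v) ^ μ.legLen x)))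

/-- `H''_λ(z,w) = ∏_{x∈d(λ)} (z^{2a+1} − w^{2l+1})^{2g}
  / ((z^{2a+2} − w^{2l})(z^{2a} − w^{2l+2}))`, as a function of the arguments `z, w`. -/
noncomputable def Hdoubleprime (g : ℕ) (μ : YoungDiagram) (z w : K2) : K2 :=
  ∏ x ∈ μ.cells,
    (z ^ (2 * μ.armLen x + 1) - w ^ (2 * μ.legLen x + 1)) ^ (2 * g)
      / ((z ^ (2 * μ.armLen x + 2) - w ^ (2 * μ.legLen x))
          * (z ^ (2 * μ.armLen x) - w ^ (2 * μ.legLen x + 2)))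

/-- Fix `g : ℕ`. For every partition `λ`, in `ℚ(s,y)` one has
`H''_λ(s, 1/(ys)) = (s²y²)^{(1−g)|λ|} · ℋ'_λ(s², y, y)`. -/
theorem Hdoubleprime_eq_Hprime (g : ℕ) (μ : YoungDiagram) :
    Hdoubleprime g μ sK (1 / (yK * sK))
      = (sK ^ 2 * yK ^ 2) ^ (((1 : ℤ) - g) * (μ.cells.card : ℤ))
          * Hprime g μ (sK ^ 2) yK yK := by
  have hs : sK ≠ 0 :=
    (map_ne_zero_iff _ (IsFractionRing.injective (MvPolynomial (Fin 2) ℚ) K2)).mpr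
      (MvPolynomial.X_ne_zero 0)
  have hy : yK ≠ 0 :=
    (map_ne_zero_iff _ (IsFractionRing.injective (MvPolynomial (Fin 2) ℚ) K2)).mpr
      (MvPolynomial.X_ne_zero 1)
  have hc : (sK ^ 2 * yK ^ 2 : K2) ≠ 0 := mul_ne_zero (pow_ne_zero _ hs) (pow_ne_zero _ hy)
  unfold Hdoubleprime Hprime
  simp only [YoungDiagram.hookLen]
  rw [Finset.prod_congr rfl (fun x _ => cell_eq sK yK hs hy g (μ.armLen x) (μ.legLen x)),
    Finset.prod_mul_distrib, prod_zpow_sum hc]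
  rw [← mul_assoc]
  congr 1
  have hsum : ∑ x ∈ μ.cells, (((1 : ℤ) - g) * (2 * (μ.legLen x : ℤ) + 1))
      = ((1 : ℤ) - g) * (μ.cells.card : ℤ) + ((2 : ℤ) - 2 * g) * (μ.nInv : ℤ) := by
    rw [← Finset.mul_sum]
    have h2 : ∑ x ∈ μ.cells, (2 * (μ.legLen x : ℤ) + 1)
        = 2 * (μ.nInv : ℤ) + (μ.cells.card : ℤ) := by
      rw [Finset.sum_add_distrib, ← Finset.mul_sum, Finset.sum_const]
      have h3 : ∑ x ∈ μ.cells, (μ.legLen x : ℤ) = (μ.nInv : ℤ) := by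
        rw [← Nat.cast_sum, sum_legLen]
      rw [h3]
      simp
    rw [h2]
    ring
  rw [hsum, zpow_add₀ hc]
  congr 1
  have hb : (sK ^ 2 * yK * yK : K2) = sK ^ 2 * yK ^ 2 := by ring
  rw [hb]
end

section
/- Fix natural numbers g and p and let σ be the ℚ-algebra automorphism of ℚ(t,u,v) fixing u and v and sending t ↦ 1/(tuv). For every partition λ, σ(ℋ^{(p)}_λ(t,u,v)) = ℋ^{(p)}_{λ'}(t,u,v), where λ' is the conjugate partition. (This is the E-polynomial specialization of the identity ℋ_λ(1/(t𝕃)) = ℋ_{λ'}(t) in the proof of Lemma 'A property'.) -/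
/-- The rational function field `ℚ(t,u,v)`. -/
noncomputable abbrev K3 : Type := FractionRing (MvPolynomial (Fin 3) ℚ)

/-- The variable `t` of `ℚ(t,u,v)`. -/
noncomputable def tK : K3 := algebraMap (MvPolynomial (Fin 3) ℚ) K3 (MvPolynomial.X 0)

/-- The variable `u` of `ℚ(t,u,v)`. -/
noncomputable def uK : K3 := algebraMap (MvPolynomial (Fin 3) ℚ) K3 (MvPolynomial.X 1)

/-- The variable `v` of `ℚ(t,u,v)`. -/
noncomputable def vK : K3 := algebraMap (MvPolynomial (Fin 3) ℚ) K3 (MvPolynomial.X 2)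

/-- `Z(s) = (1−su)^g (1−sv)^g / ((1−suv)(1−s))`, as a function of `s ∈ ℚ(t,u,v)`. -/
noncomputable def Zg (g : ℕ) (s : K3) : K3 :=
  (1 - s * uK) ^ g * (1 - s * vK) ^ g / ((1 - s * uK * vK) * (1 - s))

/-- `ℋ^{(p)}_λ(t,u,v) = ∏_{x∈d(λ)} (−t^{a(x)−l(x)} (uv)^{a(x)})^p · t^{(1−g)(2l(x)+1)}
  · Z(t^{h(x)} (uv)^{a(x)})` in `ℚ(t,u,v)`. -/
noncomputable def Hp (g p : ℕ) (μ : YoungDiagram) : K3 :=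
  ∏ x ∈ μ.cells,
    ((-(tK ^ ((μ.armLen x : ℤ) - (μ.legLen x : ℤ)) * (uK * vK) ^ μ.armLen x)) ^ p
      * tK ^ (((1 : ℤ) - g) * (2 * (μ.legLen x : ℤ) + 1))
      * Zg g (tK ^ μ.hookLen x * (uK * vK) ^ μ.armLen x))

lemma tK_ne : tK ≠ 0 := by
  have h := IsFractionRing.injective (MvPolynomial (Fin 3) ℚ) K3
  simpa [tK, map_ne_zero_iff _ h] using MvPolynomial.X_ne_zero (R := ℚ) (0 : Fin 3)

lemma uK_ne : uK ≠ 0 := by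
  have h := IsFractionRing.injective (MvPolynomial (Fin 3) ℚ) K3
  simpa [uK, map_ne_zero_iff _ h] using MvPolynomial.X_ne_zero (R := ℚ) (1 : Fin 3)

lemma vK_ne : vK ≠ 0 := by
  have h := IsFractionRing.injective (MvPolynomial (Fin 3) ℚ) K3
  simpa [vK, map_ne_zero_iff _ h] using MvPolynomial.X_ne_zero (R := ℚ) (2 : Fin 3)

lemma one_sub_mon_ne (h a b : ℕ) (hh : 0 < h) : (1 : K3) - tK ^ h * uK ^ a * vK ^ b ≠ 0 := by
  intro hc
  have hm : tK ^ h * uK ^ a * vK ^ b = 1 := by linear_combination -hc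
  have hinj := IsFractionRing.injective (MvPolynomial (Fin 3) ℚ) K3
  have heq : (MvPolynomial.X 0 : MvPolynomial (Fin 3) ℚ) ^ h * MvPolynomial.X 1 ^ a
      * MvPolynomial.X 2 ^ b = 1 := by
    apply hinj
    simpa [tK, uK, vK, map_mul, map_pow] using hm
  have := congrArg (MvPolynomial.eval (fun _ => (0 : ℚ))) heq
  simp [zero_pow hh.ne'] at this

lemma div_aux (A B C D : K3) (hB : B ≠ 0) (hC : C ≠ 0) (hD : D ≠ 0) :
    A / B / (C / D) * B = A * D / C := by
  field_simp

lemma Zg_inv (g : ℕ) (s : K3) (hs : s ≠ 0) (h1 : (1 : K3) - s ≠ 0)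
    (h2 : (1 : K3) - s * uK * vK ≠ 0) :
    Zg g (1 / (s * uK * vK)) * (s ^ 2 * uK * vK) ^ g = Zg g s * (s ^ 2 * uK * vK) := by
  have hu := uK_ne; have hv := vK_ne
  have hD0 : s ^ 2 * uK * vK ≠ 0 := mul_ne_zero (mul_ne_zero (pow_ne_zero _ hs) uK_ne) vK_ne
  have hN : (1 - 1 / (s * uK * vK) * uK) * (1 - 1 / (s * uK * vK) * vK)
      = (1 - s * uK) * (1 - s * vK) / (s ^ 2 * uK * vK) := by
    field_simp
    ring
  have hD : (1 - 1 / (s * uK * vK) * uK * vK) * (1 - 1 / (s * uK * vK))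
      = (1 - s * uK * vK) * (1 - s) / (s ^ 2 * uK * vK) := by
    field_simp
    ring
  rw [Zg, Zg, ← mul_pow, hN, hD, div_pow,
    div_aux _ _ _ _ (pow_ne_zero _ hD0) (mul_ne_zero h2 h1) hD0, mul_pow,
    div_mul_eq_mul_div]

lemma zpow_sub_nat (x : K3) (hx : x ≠ 0) (m n : ℕ) :
    x ^ ((m : ℤ) - (n : ℤ)) = x ^ m / x ^ n := by
  rw [zpow_sub₀ hx, zpow_natCast, zpow_natCast]

lemma zpow_lin (x : K3) (hx : x ≠ 0) (g l : ℕ) :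
    x ^ (((1 : ℤ) - g) * (2 * (l : ℤ) + 1)) = x ^ (2 * l + 1) / x ^ (g * (2 * l + 1)) := by
  rw [show ((1 : ℤ) - g) * (2 * (l : ℤ) + 1)
      = ((2 * l + 1 : ℕ) : ℤ) - ((g * (2 * l + 1) : ℕ) : ℤ) by push_cast; ring,
    zpow_sub₀ hx, zpow_natCast, zpow_natCast]

lemma cell_eq_s12 (g p : ℕ) (σ : K3 ≃+* K3) (hσu : σ uK = uK) (hσv : σ vK = vK)
    (hσt : σ tK = 1 / (tK * uK * vK)) (a l : ℕ) :
    σ ((-(tK ^ ((a : ℤ) - (l : ℤ)) * (uK * vK) ^ a)) ^ p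
        * tK ^ (((1 : ℤ) - g) * (2 * (l : ℤ) + 1))
        * Zg g (tK ^ (a + l + 1) * (uK * vK) ^ a))
    = (-(tK ^ ((l : ℤ) - (a : ℤ)) * (uK * vK) ^ l)) ^ p
        * tK ^ (((1 : ℤ) - g) * (2 * (a : ℤ) + 1))
        * Zg g (tK ^ (a + l + 1) * (uK * vK) ^ l) := by
  have ht := tK_ne; have hu := uK_ne; have hv := vK_ne
  set h := a + l + 1 with hh
  set s : K3 := tK ^ h * (uK * vK) ^ l with hsdef
  have hs : s ≠ 0 := mul_ne_zero (pow_ne_zero _ ht) (pow_ne_zero _ (mul_ne_zero hu hv))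
  have hhpos : 0 < h := by omega
  have h1 : (1 : K3) - s ≠ 0 := by
    have : s = tK ^ h * uK ^ l * vK ^ l := by rw [hsdef]; ring
    rw [this]; exact one_sub_mon_ne h l l hhpos
  have h2 : (1 : K3) - s * uK * vK ≠ 0 := by
    have : s * uK * vK = tK ^ h * uK ^ (l + 1) * vK ^ (l + 1) := by rw [hsdef]; ring
    rw [this]; exact one_sub_mon_ne h (l + 1) (l + 1) hhpos
  have hsu : s ^ 2 * uK * vK ≠ 0 := mul_ne_zero (mul_ne_zero (pow_ne_zero _ hs) hu) hv
  have hσZ : σ (Zg g (tK ^ h * (uK * vK) ^ a)) = Zg g (1 / (s * uK * vK)) := by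
    have harg : σ (tK ^ h * (uK * vK) ^ a) = 1 / (s * uK * vK) := by
      rw [map_mul, map_pow, map_pow, map_mul, hσt, hσu, hσv, hsdef, hh]
      simp only [one_div, inv_pow, mul_inv, mul_pow, div_eq_mul_inv, ← pow_add]
      field_simp
      ring
    simp only [Zg, map_div₀, map_mul, map_sub, map_one, map_pow, hσu, hσv, harg]
  rw [map_mul, map_mul, map_pow, map_neg, map_mul, map_zpow₀, map_zpow₀, map_pow, map_mul,
    hσt, hσu, hσv, hσZ]
  have hZ : Zg g (1 / (s * uK * vK)) = Zg g s * (s ^ 2 * uK * vK) / (s ^ 2 * uK * vK) ^ g := by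
    rw [eq_div_iff (pow_ne_zero _ hsu)]
    exact Zg_inv g s hs h1 h2
  rw [hZ]
  have htuv : (1 : K3) / (tK * uK * vK) ≠ 0 := by
    simp [div_ne_zero, mul_ne_zero, ht, hu, hv]
  rw [zpow_sub_nat _ htuv, zpow_sub_nat _ ht, zpow_lin _ htuv, zpow_lin _ ht]
  have hbase : -((1 / (tK * uK * vK)) ^ a / (1 / (tK * uK * vK)) ^ l * (uK * vK) ^ a)
      = -(tK ^ l / tK ^ a * (uK * vK) ^ l) := by
    simp only [one_div, inv_pow, mul_inv, mul_pow, div_eq_mul_inv, ← pow_add]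
    field_simp
    ring
  rw [hbase]
  have hscal : (1 / (tK * uK * vK)) ^ (2 * l + 1) / (1 / (tK * uK * vK)) ^ (g * (2 * l + 1))
      * ((s ^ 2 * uK * vK) / (s ^ 2 * uK * vK) ^ g)
      = tK ^ (2 * a + 1) / tK ^ (g * (2 * a + 1)) := by
    rw [hsdef, hh]
    simp only [one_div, inv_pow, mul_inv, mul_pow, div_eq_mul_inv, ← pow_add]
    field_simp
    ring
  linear_combination ((-(tK ^ l / tK ^ a * (uK * vK) ^ l)) ^ p * Zg g s) * hscal

lemma armLen_transpose (μ : YoungDiagram) (x : ℕ × ℕ) :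
    μ.transpose.armLen x.swap = μ.legLen x := by
  simp [YoungDiagram.armLen, YoungDiagram.legLen, YoungDiagram.rowLen_transpose]

lemma legLen_transpose (μ : YoungDiagram) (x : ℕ × ℕ) :
    μ.transpose.legLen x.swap = μ.armLen x := by
  simp [YoungDiagram.armLen, YoungDiagram.legLen, YoungDiagram.colLen_transpose]

/-- Fix `g p : ℕ` and let `σ` be the automorphism of `ℚ(t,u,v)` fixing
`u` and `v` and sending `t ↦ 1/(tuv)`. For every partition `λ`,
`σ(ℋ^{(p)}_λ(t,u,v)) = ℋ^{(p)}_{λ'}(t,u,v)`, where `λ'` is the conjugate partition. -/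
theorem sigma_Hp_eq_Hp_transpose (g p : ℕ)
    (σ : K3 ≃+* K3) (hσu : σ uK = uK) (hσv : σ vK = vK)
    (hσt : σ tK = 1 / (tK * uK * vK)) (μ : YoungDiagram) :
    σ (Hp g p μ) = Hp g p μ.transpose := by
  rw [Hp, Hp, map_prod]
  refine Finset.prod_nbij' (i := Prod.swap) (j := Prod.swap) ?_ ?_ ?_ ?_ ?_
  · intro x hx
    simpa [YoungDiagram.mem_cells, YoungDiagram.mem_transpose] using hx
  · intro y hy
    simpa [YoungDiagram.mem_cells, YoungDiagram.mem_transpose] using hy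
  · intro x _; exact Prod.swap_swap x
  · intro y _; exact Prod.swap_swap y
  · intro x _
    rw [armLen_transpose, legLen_transpose,
      show μ.transpose.hookLen x.swap = μ.armLen x + μ.legLen x + 1 by
        rw [YoungDiagram.hookLen, armLen_transpose, legLen_transpose]; omega,
      show μ.hookLen x = μ.armLen x + μ.legLen x + 1 from rfl]
    exact cell_eq_s12 g p σ hσu hσv hσt (μ.armLen x) (μ.legLen x)
end

section
/- Let K be a field, q ∈ K with q ≠ 0 and q ≠ 1, and let σ be the K-algebra automorphism of K(t) with σ(t) = 1/(tq). Let P ∈ K[t,t^{−1}] be a Laurent polynomial with σ(P) = P. Then P − P(1) is divisible by (1−t)(1−tq) in K[t,t^{−1}], where P(1) ∈ K is the value of P at t = 1. (This divisibility is the key step in the proof of Theorem 1.2 (main2): H̃_n(t) − H̃_n(1) is divisible by (1−t)(1−t𝕃).) -/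
/-- Let `K` be a field, `q ∈ K` with `q ≠ 0` and `q ≠ 1`, and let `σ` be
the `K`-algebra automorphism of `K(t)` with `σ(t) = 1/(tq)`. Let `P ∈ K[t,t^{−1}]` be
a Laurent polynomial with `σ(P) = P`. Then `P − P(1)` is divisible by `(1−t)(1−tq)`
in `K[t,t^{−1}]`, where `P(1)` is the value of `P` at `t = 1`.

Here `K(t)` is `RatFunc K`; a Laurent polynomial is an element of the form
`Σ_{n ∈ supp} C(a n)·t^n` (`supp` a finite set of integers), its value at `t = 1` is
`Σ_{n ∈ supp} a n`, and divisibility in `K[t,t^{−1}]` means that the quotient is again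
a Laurent polynomial. -/
theorem laurent_divisibility {K : Type*} [Field K] (q : K) (hq0 : q ≠ 0) (hq1 : q ≠ 1)
    (σ : RatFunc K ≃+* RatFunc K)
    (hσC : ∀ c : K, σ (RatFunc.C c) = RatFunc.C c)
    (hσt : σ RatFunc.X = 1 / (RatFunc.X * RatFunc.C q))
    (supp : Finset ℤ) (a : ℤ → K) (P : RatFunc K)
    (hP : P = ∑ n ∈ supp, RatFunc.C (a n) * (RatFunc.X : RatFunc K) ^ n)
    (hinv : σ P = P) :
    ∃ (supp' : Finset ℤ) (b : ℤ → K),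
      P - RatFunc.C (∑ n ∈ supp, a n)
        = (1 - RatFunc.X) * (1 - RatFunc.X * RatFunc.C q) *
            ∑ n ∈ supp', RatFunc.C (b n) * (RatFunc.X : RatFunc K) ^ n := by
  classical
  set c : K := ∑ n ∈ supp, a n with hc
  set N : ℕ := supp.sup (fun n => n.natAbs) with hNdef
  have hbound : ∀ n ∈ supp, n.natAbs ≤ N := fun n hn => Finset.le_sup hn
  have hge : ∀ n ∈ supp, (0:ℤ) ≤ n + N := fun n hn => by have := hbound n hn; omega
  have hle : ∀ n ∈ supp, (0:ℤ) ≤ (N:ℤ) - n := fun n hn => by have := hbound n hn; omega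
  set A := algebraMap (Polynomial K) (RatFunc K) with hA
  have hXz : (RatFunc.X : RatFunc K) ≠ 0 := RatFunc.X_ne_zero
  have hXpow : ∀ m : ℤ, 0 ≤ m →
      (RatFunc.X : RatFunc K) ^ m = A (Polynomial.X ^ m.toNat) := by
    intro m hm
    rw [map_pow, RatFunc.algebraMap_X, ← zpow_natCast, Int.toNat_of_nonneg hm]
  set f : Polynomial K :=
    ∑ n ∈ supp, Polynomial.C (a n) * Polynomial.X ^ (n + N).toNat with hf
  set f₂ : Polynomial K :=
    ∑ n ∈ supp, Polynomial.C (a n * q ^ (-n)) * Polynomial.X ^ ((N:ℤ) - n).toNat with hf₂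
  have h1 : A f = RatFunc.X ^ N * P := by
    rw [hP, Finset.mul_sum, hf, map_sum]
    refine Finset.sum_congr rfl fun n hn => ?_
    rw [map_mul, RatFunc.algebraMap_C, ← hXpow _ (hge n hn),
      zpow_add₀ hXz, zpow_natCast]
    ring
  have hσP : σ P = ∑ n ∈ supp, RatFunc.C (a n * q ^ (-n)) * RatFunc.X ^ (-n) := by
    rw [hP, map_sum]
    refine Finset.sum_congr rfl fun n hn => ?_
    rw [map_mul, hσC, map_zpow₀, hσt, one_div, inv_zpow', mul_zpow,
      ← map_zpow₀ (RatFunc.C : K →+* RatFunc K), map_mul]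
    ring
  have h2 : A f₂ = RatFunc.X ^ N * P := by
    rw [← hinv, hσP, Finset.mul_sum, hf₂, map_sum]
    refine Finset.sum_congr rfl fun n hn => ?_
    rw [map_mul, RatFunc.algebraMap_C, ← hXpow _ (hle n hn),
      show (N:ℤ) - n = -n + N by ring, zpow_add₀ hXz, zpow_natCast]
    ring
  have hff : f = f₂ := RatFunc.algebraMap_injective K (h1.trans h2.symm)
  have he1 : f.eval 1 = c := by
    simp [hf, Polynomial.eval_finset_sum, hc]
  have he2 : f₂.eval 1 = ∑ n ∈ supp, a n * q ^ (-n) := by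
    simp [hf₂, Polynomial.eval_finset_sum]
  have hsum : ∑ n ∈ supp, a n * q ^ (-n) = c := by rw [← he2, ← hff, he1]
  have heq : f.eval q⁻¹ = c * q⁻¹ ^ N := by
    rw [hf, Polynomial.eval_finset_sum]
    rw [← hsum, Finset.sum_mul]
    refine Finset.sum_congr rfl fun n hn => ?_
    rw [Polynomial.eval_mul, Polynomial.eval_C, Polynomial.eval_pow, Polynomial.eval_X]
    rw [← zpow_natCast q⁻¹ (n + N).toNat, Int.toNat_of_nonneg (hge n hn),
      inv_zpow, ← zpow_neg, neg_add, zpow_add₀ hq0, mul_assoc]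
    congr 1
    rw [← zpow_natCast q⁻¹ N, inv_zpow, ← zpow_neg]
  set g : Polynomial K := f - Polynomial.C c * Polynomial.X ^ N with hgdef
  have hgr1 : g.IsRoot 1 := by
    simp [hgdef, Polynomial.IsRoot, he1]
  have hq1' : (q⁻¹ : K) ≠ 1 := fun hh => hq1 (inv_eq_one.mp hh)
  have hgrq : g.IsRoot q⁻¹ := by
    simp [hgdef, Polynomial.IsRoot, heq]
  obtain ⟨g1, hg1eq⟩ := Polynomial.dvd_iff_isRoot.mpr hgr1
  have hg1root : g1.IsRoot q⁻¹ := by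
    have h0 := hgrq
    rw [Polynomial.IsRoot, hg1eq, Polynomial.eval_mul, Polynomial.eval_sub,
      Polynomial.eval_X, Polynomial.eval_C, mul_eq_zero] at h0
    rcases h0 with h0 | h0
    · exact absurd (sub_eq_zero.mp h0) hq1'
    · exact h0
  obtain ⟨h, hheq⟩ := Polynomial.dvd_iff_isRoot.mpr hg1root
  have hAg : A g = RatFunc.X ^ N * (P - RatFunc.C c) := by
    rw [hgdef, map_sub, map_mul, map_pow, RatFunc.algebraMap_C, RatFunc.algebraMap_X, h1]
    ring
  have hPc : P - RatFunc.C c = RatFunc.X ^ (-(N:ℤ)) * A g := by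
    rw [hAg, ← mul_assoc, ← zpow_natCast (RatFunc.X : RatFunc K) N, ← zpow_add₀ hXz]
    simp
  have e2 : RatFunc.C q * RatFunc.C q⁻¹ = 1 := by
    rw [← map_mul, mul_inv_cancel₀ hq0, map_one]
  have hfac : (1 - RatFunc.X) * (1 - RatFunc.X * RatFunc.C q)
      = RatFunc.C q * ((RatFunc.X - 1) * (RatFunc.X - RatFunc.C q⁻¹)) := by
    linear_combination (RatFunc.X - 1) * e2
  set R : RatFunc K := RatFunc.C q⁻¹ * RatFunc.X ^ (-(N:ℤ)) * A h with hR
  have hmain : P - RatFunc.C c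
      = (1 - RatFunc.X) * (1 - RatFunc.X * RatFunc.C q) * R := by
    rw [hPc, hg1eq, hheq, map_mul, map_mul, map_sub, map_sub, RatFunc.algebraMap_X,
      map_one, RatFunc.algebraMap_C, map_one, hfac, hR]
    linear_combination (-(RatFunc.X ^ (-(N:ℤ)) * (RatFunc.X - 1) *
      (RatFunc.X - RatFunc.C q⁻¹) * A h)) * e2
  refine ⟨h.support.image (fun i : ℕ => (i:ℤ) - N),
    fun m : ℤ => q⁻¹ * h.coeff (m + N).toNat, ?_⟩
  rw [hmain]
  congr 1
  rw [hR]
  have hinj : Set.InjOn (fun i : ℕ => (i:ℤ) - N) h.support := by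
    intro i _ j _ hij
    simpa using hij
  rw [Finset.sum_image hinj]
  conv_lhs => rw [h.as_sum_support_C_mul_X_pow]
  rw [map_sum, Finset.mul_sum]
  refine Finset.sum_congr rfl fun i hi => ?_
  beta_reduce
  rw [map_mul, map_pow, RatFunc.algebraMap_C, RatFunc.algebraMap_X]
  rw [show ((i:ℤ) - N + N).toNat = i by omega]
  rw [map_mul, ← zpow_natCast (RatFunc.X : RatFunc K) i,
    show (i:ℤ) - N = -(N:ℤ) + i by ring, zpow_add₀ hXz]
  ring
end
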